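/- Let φ be a completely additive state on ℓ∞(κ). Then for every f ∈ ℓ∞(κ), φ(f) = ∑'_{i ∈ κ} ν_φ({i}) · f(i), where the sum converges unconditionally in ℂ. -/

import Mathlib

open scoped ENNReal
open Filter

universe u

/-- The indicator function of `I` as an element of `ℓ∞(κ)`. -/
noncomputable def chi {κ : Type*} (I : Set κ) : lp (fun _ : κ => ℂ) ∞ :=
  ⟨I.indicator (fun _ => (1 : ℂ)), memℓp_infty ⟨1, by
    rintro x ⟨i, rfl⟩
    by_cases h : i ∈ I <;> simp [Set.indicator, h]⟩⟩

/-- A state on `ℓ∞(κ)`: a continuous linear functional with `φ 1 = 1` that takes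
nonnegative real values on functions with nonnegative real values. -/
structure IsState {κ : Type*} (φ : lp (fun _ : κ => ℂ) ∞ →L[ℂ] ℂ) : Prop where
  map_one : φ 1 = 1
  nonneg : ∀ f : lp (fun _ : κ => ℂ) ∞,
    (∀ i, ∃ r : ℝ, 0 ≤ r ∧ f i = r) → ∃ r : ℝ, 0 ≤ r ∧ φ f = r

/-! Complete additivity applied to the singletons gives `∑' i, φ (chi {i}) = 1`; since this
`tsum` is nonzero the family is summable, so `φ (chi Fᶜ) → 0` along finite sets `F`. Positivity
yields `‖φ (g * chi S)‖ ≤ 2 * ‖g‖ * ‖φ (chi S)‖` (split `g` into real and imaginary parts and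
compare with `± ‖g‖ • chi S`), and `φ f - ∑ i ∈ F, φ (chi {i}) * f i = φ (f * chi Fᶜ)`. -/

open scoped ComplexOrder
open Topology

section Indicator

variable {κ : Type*}

lemma chi_apply (I : Set κ) (i : κ) : chi I i = I.indicator 1 i := rfl

lemma chi_univ : chi (Set.univ : Set κ) = 1 := by
  ext i
  simp [chi_apply, lp.infty_coeFn_one]

lemma chi_compl (I : Set κ) : chi Iᶜ = 1 - chi I := by
  ext i
  rw [lp.coeFn_sub, Pi.sub_apply, lp.infty_coeFn_one, Pi.one_apply]
  by_cases hi : i ∈ I <;> simp [chi_apply, hi]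

lemma mul_chi_singleton (f : lp (fun _ : κ => ℂ) ∞) (i : κ) : f * chi {i} = f i • chi {i} := by
  ext j
  by_cases hj : j = i <;> simp [chi_apply, lp.infty_coeFn_mul, hj]

lemma chi_finset (F : Finset κ) : chi (F : Set κ) = ∑ i ∈ F, chi {i} := by
  classical
  ext j
  rw [lp.coeFn_sum, Finset.sum_apply]
  by_cases hj : j ∈ F <;> simp [chi_apply, Set.indicator_apply, hj]

lemma sum_smul_chi_singleton_add_mul_chi_compl (f : lp (fun _ : κ => ℂ) ∞) (F : Finset κ) :
    ∑ i ∈ F, f i • chi {i} + f * chi (F : Set κ)ᶜ = f := by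
  simp_rw [← mul_chi_singleton, ← Finset.mul_sum, ← chi_finset, chi_compl]
  ring

end Indicator

lemma Complex.norm_le_of_neg_le_of_le {z w : ℂ} (h₁ : -w ≤ z) (h₂ : z ≤ w) : ‖z‖ ≤ ‖w‖ := by
  rw [Complex.le_def, Complex.neg_re, Complex.neg_im] at h₁
  rw [Complex.le_def] at h₂
  have hz : z.im = 0 := by linarith [h₁.2, h₂.2]
  calc ‖z‖ = |z.re| := (Complex.abs_re_eq_norm.2 hz).symm
    _ ≤ w.re := abs_le.2 ⟨by linarith [h₁.1], h₂.1⟩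
    _ ≤ ‖w‖ := Complex.re_le_norm w

namespace IsState

variable {κ : Type*} {φ : lp (fun _ : κ => ℂ) ∞ →L[ℂ] ℂ}

lemma apply_nonneg (hφ : IsState φ) {f : lp (fun _ : κ => ℂ) ∞} (hf : ∀ i, 0 ≤ f i) :
    0 ≤ φ f := by
  obtain ⟨r, hr, hφf⟩ := hφ.nonneg f fun i =>
    ⟨(f i).re, (Complex.nonneg_iff.1 (hf i)).1,
      Complex.eq_re_of_ofReal_le (r := 0) (by rw [Complex.ofReal_zero]; exact hf i)⟩
  exact hφf ▸ Complex.zero_le_real.2 hr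

lemma apply_mono (hφ : IsState φ) {f g : lp (fun _ : κ => ℂ) ∞} (hfg : ∀ i, f i ≤ g i) :
    φ f ≤ φ g := by
  have := hφ.apply_nonneg (f := g - f) fun i => by simpa [lp.coeFn_sub] using hfg i
  simpa using this

lemma norm_apply_mul_chi_le_of_isSelfAdjoint (hφ : IsState φ) {f : lp (fun _ : κ => ℂ) ∞}
    (hf : IsSelfAdjoint f) (I : Set κ) : ‖φ (f * chi I)‖ ≤ ‖f‖ * ‖φ (chi I)‖ := by
  have hbound (i : κ) : -((‖f‖ : ℂ) * chi I i) ≤ f i * chi I i ∧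
      f i * chi I i ≤ (‖f‖ : ℂ) * chi I i := by
    have him : (f i).im = 0 :=
      Complex.conj_eq_iff_im.1 (by simpa using congrFun (congrArg (⇑) hf) i)
    have hre : |(f i).re| ≤ ‖f‖ :=
      (Complex.abs_re_le_norm _).trans (lp.norm_apply_le_norm ENNReal.top_ne_zero f i)
    by_cases hi : i ∈ I <;> simp [chi_apply, hi, Complex.le_def, him, abs_le.1 hre]
  have := Complex.norm_le_of_neg_le_of_le
    (map_neg φ _ ▸ hφ.apply_mono (f := -((‖f‖ : ℂ) • chi I)) (g := f * chi I) fun i => by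
      simpa only [lp.coeFn_neg, lp.infty_coeFn_mul, lp.coeFn_smul, Pi.neg_apply, Pi.mul_apply,
        Pi.smul_apply, smul_eq_mul] using (hbound i).1)
    (hφ.apply_mono (f := f * chi I) (g := (‖f‖ : ℂ) • chi I) fun i => by
      simpa only [lp.infty_coeFn_mul, lp.coeFn_smul, Pi.mul_apply, Pi.smul_apply,
        smul_eq_mul] using (hbound i).2)
  simpa using this

lemma norm_apply_mul_chi_le (hφ : IsState φ) (f : lp (fun _ : κ => ℂ) ∞) (I : Set κ) :
    ‖φ (f * chi I)‖ ≤ 2 * ‖f‖ * ‖φ (chi I)‖ := by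
  have hre := hφ.norm_apply_mul_chi_le_of_isSelfAdjoint (realPart f).2 I
  have him := hφ.norm_apply_mul_chi_le_of_isSelfAdjoint (imaginaryPart f).2 I
  calc ‖φ (f * chi I)‖
      = ‖φ (realPart f * chi I) + Complex.I * φ (imaginaryPart f * chi I)‖ := by
        conv_lhs => rw [← realPart_add_I_smul_imaginaryPart f]
        rw [add_mul, smul_mul_assoc, map_add, map_smul, smul_eq_mul]
    _ ≤ ‖φ (realPart f * chi I)‖ + ‖φ (imaginaryPart f * chi I)‖ := by
        simpa using norm_add_le (φ (realPart f * chi I)) (Complex.I * φ (imaginaryPart f * chi I))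
    _ ≤ ‖f‖ * ‖φ (chi I)‖ + ‖f‖ * ‖φ (chi I)‖ := by
        gcongr
        · exact hre.trans (by gcongr; exact realPart.norm_le f)
        · exact him.trans (by gcongr; exact imaginaryPart.norm_le f)
    _ = 2 * ‖f‖ * ‖φ (chi I)‖ := by ring

lemma hasSum_apply_chi_singleton_mul (hφ : IsState φ) (hμ : HasSum (fun i => φ (chi {i})) 1)
    (f : lp (fun _ : κ => ℂ) ∞) :
    HasSum (fun i => φ (chi {i}) * f i) (φ f) := by
  have hcompl : Tendsto (fun F : Finset κ => φ (chi (F : Set κ)ᶜ)) atTop (𝓝 0) := by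
    have h := (tendsto_const_nhds (x := (1 : ℂ))).sub hμ
    rw [sub_self] at h
    refine h.congr fun F => ?_
    rw [chi_compl, map_sub, hφ.map_one, chi_finset, map_sum]
  have htail : Tendsto (fun F : Finset κ => φ (f * chi (F : Set κ)ᶜ)) atTop (𝓝 0) := by
    refine squeeze_zero_norm (fun F => hφ.norm_apply_mul_chi_le f _) ?_
    simpa using hcompl.norm.const_mul (2 * ‖f‖)
  have h := (tendsto_const_nhds (x := φ f)).sub htail
  rw [sub_zero] at h
  refine h.congr fun F => ?_
  rw [sub_eq_iff_eq_add]
  conv_lhs => rw [← sum_smul_chi_singleton_add_mul_chi_compl f F]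
  simp [map_sum, mul_comm]

end IsState

theorem stmt_15_general {κ : Type u} (φ : lp (fun _ : κ => ℂ) ∞ →L[ℂ] ℂ)
    (hφ : IsState φ)
    (hca : ∀ (ι : Type u) (A : ι → Set κ), Pairwise (Function.onFun Disjoint A) →
      φ (chi (⋃ α, A α)) = ∑' α, φ (chi (A α))) :
    ∀ f : lp (fun _ : κ => ℂ) ∞,
      HasSum (fun i => φ (chi {i}) * f i) (φ f) := by
  have htsum : ∑' i, φ (chi {i}) = 1 := by
    have h := hca κ (fun i => {i}) fun i j hij => Set.disjoint_singleton.2 hij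
    rwa [Set.iUnion_of_singleton, chi_univ, hφ.map_one, eq_comm] at h
  have hsummable : Summable fun i => φ (chi {i}) := by
    by_contra h
    rw [tsum_eq_zero_of_not_summable h] at htsum
    exact zero_ne_one htsum
  exact hφ.hasSum_apply_chi_singleton_mul (htsum ▸ hsummable.hasSum)

theorem stmt_15 {κ : Type u} [Infinite κ] (φ : lp (fun _ : κ => ℂ) ∞ →L[ℂ] ℂ)
    (hφ : IsState φ)
    (hca : ∀ (ι : Type u) (A : ι → Set κ), Pairwise (Function.onFun Disjoint A) →
      φ (chi (⋃ α, A α)) = ∑' α, φ (chi (A α))) :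
    ∀ f : lp (fun _ : κ => ℂ) ∞,
      HasSum (fun i => φ (chi {i}) * f i) (φ f) :=
  stmt_15_general φ hφ hca
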